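/- For every y ∈ 𝒴 and every pair a, b ∈ ℓ̄₁(Λ), the function φ(t) = h_ε(a + t(b − a), y) is three times differentiable on (0,1) and satisfies the self-concordance inequality |φ'''(t)| ≤ (2/ε) ‖b − a‖_{ℓ1} φ''(t) for all 0 < t < 1. -/

import Mathlib

open MeasureTheory Complex Filter Topology

set_option maxHeartbeats 1000000

noncomputable section

/-- Frequencies: `Λ = ℤ^d \ {0}`. -/
abbrev Lam (d : ℕ) := {v : Fin d → ℤ // v ≠ 0}

/-- Negation on `Λ`. -/
def negL {d : ℕ} (l : Lam d) : Lam d := ⟨-l.1, by simpa using l.2⟩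

/-- Fourier character `φ_λ(x) = exp(2πi⟨λ,x⟩)`. -/
def phiF {d : ℕ} (l : Lam d) (x : Fin d → ℝ) : ℂ :=
  Complex.exp (2 * (Real.pi : ℂ) * Complex.I * (∑ i, (l.1 i : ℂ) * (x i : ℂ)))

/-- The real Banach space `ℓ̄₁(Λ)` of complex summable sequences with
`θ_{-λ} = conj (θ_λ)`, as a real submodule of `ℓ¹(Λ; ℂ)`. -/
def SymmL1 (d : ℕ) : Submodule ℝ (lp (fun _ : Lam d => ℂ) 1) where
  carrier := {θ | ∀ l, θ (negL l) = starRingEnd ℂ (θ l)}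
  add_mem' := by
    intro a b ha hb l
    simp only [lp.coeFn_add, Pi.add_apply, map_add, ha l, hb l]
  zero_mem' := by
    intro l
    simp [lp.coeFn_zero]
  smul_mem' := by
    intro r a ha l
    simp only [lp.coeFn_smul, Pi.smul_apply, ha l, Complex.real_smul, map_mul,
      Complex.conj_ofReal]

instance (d : ℕ) : NormedAddCommGroup (SymmL1 d) := inferInstance

instance (d : ℕ) : NormedSpace ℝ (SymmL1 d) := inferInstance

/-- The `λ`-th coefficient of an element of `ℓ̄₁(Λ)`. -/
def coeffL {d : ℕ} (θ : SymmL1 d) (l : Lam d) : ℂ := (θ : lp (fun _ : Lam d => ℂ) 1) l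

/-- The unit cube `𝒳 = [0,1]^d`. -/
def cube (d : ℕ) : Set (Fin d → ℝ) := Set.Icc 0 1

/-- The uniform probability measure on the unit cube. -/
def muU (d : ℕ) : Measure (Fin d → ℝ) := volume.restrict (cube d)

/-- `u_θ(x) = Σ_λ θ_λ φ_λ(x)` (a real number thanks to the symmetry of `θ`). -/
def uFun {d : ℕ} (θ : SymmL1 d) (x : Fin d → ℝ) : ℝ :=
  (∑' l : Lam d, coeffL θ l * phiF l x).re

/-- `h_ε(θ, y)`. -/
def hEps {d : ℕ} (ε : ℝ) (c : (Fin d → ℝ) → (Fin d → ℝ) → ℝ)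
    (θ : SymmL1 d) (y : Fin d → ℝ) : ℝ :=
  ε * Real.log (∫ x, Real.exp ((uFun θ x - c x y) / ε) ∂muU d) + ε

/-- `H_ε(θ) = ∫ h_ε(θ, y) dν(y)`. -/
def HEps {d : ℕ} (ε : ℝ) (c : (Fin d → ℝ) → (Fin d → ℝ) → ℝ)
    (ν : Measure (Fin d → ℝ)) (θ : SymmL1 d) : ℝ :=
  ∫ y, hEps ε c θ y ∂ν

/-- The probability density `F_{θ,y}`. -/
def Fdens {d : ℕ} (ε : ℝ) (c : (Fin d → ℝ) → (Fin d → ℝ) → ℝ)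
    (θ : SymmL1 d) (y : Fin d → ℝ) (x : Fin d → ℝ) : ℝ :=
  Real.exp ((uFun θ x - c x y) / ε) /
    ∫ x', Real.exp ((uFun θ x' - c x' y) / ε) ∂muU d

/-- `g_λ(θ,y) = ∫ conj(φ_λ) F_{θ,y} dμ`, the `λ`-th partial derivative of `h_ε(·,y)`. -/
def gradC {d : ℕ} (ε : ℝ) (c : (Fin d → ℝ) → (Fin d → ℝ) → ℝ)
    (θ : SymmL1 d) (y : Fin d → ℝ) (l : Lam d) : ℂ :=
  ∫ x, starRingEnd ℂ (phiF l x) * (Fdens ε c θ y x : ℂ) ∂muU d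

/-! Along the segment, `h_ε(a + t(b - a), y) = ε log Z(t) + ε` with `Z(t) = ∫ e^{A + tB} dμ`,
`A = (u_a - c(·, y))/ε` and `B = u_{b-a}/ε`. Differentiating under the integral sign, the first
three derivatives of `log Z` are the mean, the variance and the third central moment of `B` under
the tilted probability measure `e^{A + tB} μ / Z`. As `|B| ≤ ‖b - a‖/ε`, `B` stays within
`2‖b - a‖/ε` of its mean, so the third central moment is at most `2‖b - a‖/ε` times the variance.
Lower semicontinuity of `c` on the compact cube bounds `c(·, y)` from below, which makes `e^A`
integrable. -/

section TiltedMoments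

variable {α : Type*} [MeasurableSpace α] {μ : Measure α} {A B : α → ℝ} {M : ℝ}

def tiltedMoment (μ : Measure α) (A B : α → ℝ) (k : ℕ) (t : ℝ) : ℝ :=
  ∫ x, B x ^ k * Real.exp (A x + t * B x) ∂μ

lemma integrable_mul_exp_tilt {G : α → ℝ} {K : ℝ}
    (hA : Integrable (fun x => Real.exp (A x)) μ) (hB : AEStronglyMeasurable B μ)
    (hBM : ∀ᵐ x ∂μ, |B x| ≤ M) (hG : AEStronglyMeasurable G μ) (hGK : ∀ᵐ x ∂μ, |G x| ≤ K)
    (t : ℝ) : Integrable (fun x => G x * Real.exp (A x + t * B x)) μ := by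
  have hbdd : Integrable (fun x => (G x * Real.exp (t * B x)) * Real.exp (A x)) μ := by
    refine hA.bdd_mul (c := K * Real.exp (|t| * M))
      (hG.mul (Real.continuous_exp.comp_aestronglyMeasurable (hB.const_mul t))) ?_
    filter_upwards [hBM, hGK] with x hBx hGx
    rw [norm_mul, Real.norm_eq_abs, Real.norm_of_nonneg (Real.exp_pos _).le]
    refine mul_le_mul hGx (Real.exp_le_exp.2 ?_) (Real.exp_pos _).le ((abs_nonneg _).trans hGx)
    calc t * B x ≤ |t| * |B x| := by rw [← abs_mul]; exact le_abs_self _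
      _ ≤ |t| * M := by gcongr
  refine hbdd.congr (ae_of_all _ fun x => ?_)
  simp only [Real.exp_add]
  ring

lemma integrable_pow_mul_exp_tilt (hA : Integrable (fun x => Real.exp (A x)) μ)
    (hB : AEStronglyMeasurable B μ) (hBM : ∀ᵐ x ∂μ, |B x| ≤ M) (k : ℕ) (t : ℝ) :
    Integrable (fun x => B x ^ k * Real.exp (A x + t * B x)) μ :=
  integrable_mul_exp_tilt hA hB hBM (K := M ^ k) (hB.pow k)
    (hBM.mono fun x hx => by
      simpa only [Pi.pow_apply, abs_pow] using pow_le_pow_left₀ (abs_nonneg _) hx k) t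

lemma hasDerivAt_tiltedMoment (hA : Integrable (fun x => Real.exp (A x)) μ)
    (hB : AEStronglyMeasurable B μ) (hBM : ∀ᵐ x ∂μ, |B x| ≤ M) (k : ℕ) (t : ℝ) :
    HasDerivAt (tiltedMoment μ A B k) (tiltedMoment μ A B (k + 1) t) t := by
  have hint := integrable_pow_mul_exp_tilt hA hB hBM
  refine (hasDerivAt_integral_of_dominated_loc_of_deriv_le
    (F := fun s x => B x ^ k * Real.exp (A x + s * B x))
    (F' := fun s x => B x ^ (k + 1) * Real.exp (A x + s * B x))
    (bound := fun x => M ^ (k + 1) * (Real.exp (A x) * Real.exp ((|t| + 1) * M)))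
    (Metric.ball_mem_nhds t one_pos) (.of_forall fun s => (hint k s).aestronglyMeasurable)
    (hint k t) (hint (k + 1) t).aestronglyMeasurable ?_ ((hA.mul_const _).const_mul _) ?_).2
  · filter_upwards [hBM] with x hx s hs
    have hst : |s| ≤ |t| + 1 := by
      have hsub := abs_sub_abs_le_abs_sub s t
      rw [Metric.mem_ball, Real.dist_eq] at hs
      linarith
    have hM : 0 ≤ M := (abs_nonneg _).trans hx
    rw [norm_mul, norm_pow, Real.norm_eq_abs, Real.norm_of_nonneg (Real.exp_pos _).le,
      ← Real.exp_add]
    refine mul_le_mul (pow_le_pow_left₀ (abs_nonneg _) hx _) (Real.exp_le_exp.2 ?_)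
      (Real.exp_pos _).le (pow_nonneg hM _)
    calc A x + s * B x ≤ A x + |s| * |B x| := by
          rw [← abs_mul]; exact add_le_add_right (le_abs_self _) _
      _ ≤ A x + (|t| + 1) * M := by gcongr
  · refine ae_of_all _ fun x s _ => ?_
    exact ((((hasDerivAt_mul_const (x := s) (B x)).const_add (A x)).exp).const_mul
      (B x ^ k)).congr_deriv (by ring)

lemma integral_sub_sq_mul_exp_tilt (hA : Integrable (fun x => Real.exp (A x)) μ)
    (hB : AEStronglyMeasurable B μ) (hBM : ∀ᵐ x ∂μ, |B x| ≤ M) (c t : ℝ) :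
    ∫ x, (B x - c) ^ 2 * Real.exp (A x + t * B x) ∂μ =
      tiltedMoment μ A B 2 t - 2 * c * tiltedMoment μ A B 1 t
        + c ^ 2 * tiltedMoment μ A B 0 t := by
  have h0 := integrable_pow_mul_exp_tilt hA hB hBM 0 t
  have h1 := integrable_pow_mul_exp_tilt hA hB hBM 1 t
  have h2 := integrable_pow_mul_exp_tilt hA hB hBM 2 t
  simp only [tiltedMoment]
  rw [← integral_const_mul, ← integral_const_mul, ← integral_sub, ← integral_add]
  · congr 1 with x
    ring
  all_goals fun_prop

lemma integral_sub_cube_mul_exp_tilt (hA : Integrable (fun x => Real.exp (A x)) μ)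
    (hB : AEStronglyMeasurable B μ) (hBM : ∀ᵐ x ∂μ, |B x| ≤ M) (c t : ℝ) :
    ∫ x, (B x - c) ^ 3 * Real.exp (A x + t * B x) ∂μ =
      tiltedMoment μ A B 3 t - 3 * c * tiltedMoment μ A B 2 t
        + 3 * c ^ 2 * tiltedMoment μ A B 1 t - c ^ 3 * tiltedMoment μ A B 0 t := by
  have h0 := integrable_pow_mul_exp_tilt hA hB hBM 0 t
  have h1 := integrable_pow_mul_exp_tilt hA hB hBM 1 t
  have h2 := integrable_pow_mul_exp_tilt hA hB hBM 2 t
  have h3 := integrable_pow_mul_exp_tilt hA hB hBM 3 t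
  simp only [tiltedMoment]
  rw [← integral_const_mul, ← integral_const_mul, ← integral_const_mul, ← integral_sub,
    ← integral_add, ← integral_sub]
  · congr 1 with x
    ring
  all_goals fun_prop

lemma abs_tiltedMoment_one_le (hA : Integrable (fun x => Real.exp (A x)) μ)
    (hB : AEStronglyMeasurable B μ) (hBM : ∀ᵐ x ∂μ, |B x| ≤ M) (t : ℝ) :
    |tiltedMoment μ A B 1 t| ≤ M * tiltedMoment μ A B 0 t := by
  have hint k := integrable_pow_mul_exp_tilt hA hB hBM k t
  rw [tiltedMoment, tiltedMoment, ← integral_const_mul, ← Real.norm_eq_abs]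
  refine (norm_integral_le_integral_norm _).trans
    (integral_mono_ae (hint 1).norm ((hint 0).const_mul M) ?_)
  filter_upwards [hBM] with x hx
  rw [norm_mul, Real.norm_eq_abs, Real.norm_of_nonneg (Real.exp_pos _).le, pow_one, pow_zero,
    one_mul]
  exact mul_le_mul_of_nonneg_right hx (Real.exp_pos _).le

variable [NeZero μ]

lemma tiltedMoment_zero_pos (hA : Integrable (fun x => Real.exp (A x)) μ)
    (hB : AEStronglyMeasurable B μ) (hBM : ∀ᵐ x ∂μ, |B x| ≤ M) (t : ℝ) :
    0 < tiltedMoment μ A B 0 t := by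
  have hint := integrable_pow_mul_exp_tilt hA hB hBM 0 t
  simp only [pow_zero, one_mul] at hint
  simp only [tiltedMoment, pow_zero, one_mul]
  refine (integral_pos_iff_support_of_nonneg (fun x => (Real.exp_pos _).le) hint).2 ?_
  simp [Function.support, Real.exp_ne_zero, NeZero.ne μ]

def tiltedMean (μ : Measure α) (A B : α → ℝ) (t : ℝ) : ℝ :=
  tiltedMoment μ A B 1 t / tiltedMoment μ A B 0 t

def tiltedVariance (μ : Measure α) (A B : α → ℝ) (t : ℝ) : ℝ :=
  (tiltedMoment μ A B 2 t * tiltedMoment μ A B 0 t - tiltedMoment μ A B 1 t ^ 2) /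
    tiltedMoment μ A B 0 t ^ 2

def tiltedThirdCumulant (μ : Measure α) (A B : α → ℝ) (t : ℝ) : ℝ :=
  (tiltedMoment μ A B 3 t * tiltedMoment μ A B 0 t ^ 2
      - 3 * tiltedMoment μ A B 1 t * tiltedMoment μ A B 2 t * tiltedMoment μ A B 0 t
      + 2 * tiltedMoment μ A B 1 t ^ 3) / tiltedMoment μ A B 0 t ^ 3

lemma hasDerivAt_log_tiltedMoment_zero (hA : Integrable (fun x => Real.exp (A x)) μ)
    (hB : AEStronglyMeasurable B μ) (hBM : ∀ᵐ x ∂μ, |B x| ≤ M) (t : ℝ) :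
    HasDerivAt (fun s => Real.log (tiltedMoment μ A B 0 s)) (tiltedMean μ A B t) t :=
  (hasDerivAt_tiltedMoment hA hB hBM 0 t).log (tiltedMoment_zero_pos hA hB hBM t).ne'

lemma hasDerivAt_tiltedMean (hA : Integrable (fun x => Real.exp (A x)) μ)
    (hB : AEStronglyMeasurable B μ) (hBM : ∀ᵐ x ∂μ, |B x| ≤ M) (t : ℝ) :
    HasDerivAt (tiltedMean μ A B) (tiltedVariance μ A B t) t := by
  have h0 := tiltedMoment_zero_pos hA hB hBM t
  refine ((hasDerivAt_tiltedMoment hA hB hBM 1 t).div (hasDerivAt_tiltedMoment hA hB hBM 0 t)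
    h0.ne').congr_deriv ?_
  rw [tiltedVariance]
  ring

lemma hasDerivAt_tiltedVariance (hA : Integrable (fun x => Real.exp (A x)) μ)
    (hB : AEStronglyMeasurable B μ) (hBM : ∀ᵐ x ∂μ, |B x| ≤ M) (t : ℝ) :
    HasDerivAt (tiltedVariance μ A B) (tiltedThirdCumulant μ A B t) t := by
  have h0 := tiltedMoment_zero_pos hA hB hBM t
  have hm k := hasDerivAt_tiltedMoment hA hB hBM k t
  refine ((((hm 2).mul (hm 0)).sub ((hm 1).pow 2)).div ((hm 0).pow 2)
    (pow_ne_zero 2 h0.ne')).congr_deriv ?_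
  simp only [tiltedThirdCumulant, Pi.mul_apply, Pi.sub_apply, Pi.pow_apply]
  field_simp
  ring

lemma abs_tiltedThirdCumulant_le (hA : Integrable (fun x => Real.exp (A x)) μ)
    (hB : AEStronglyMeasurable B μ) (hBM : ∀ᵐ x ∂μ, |B x| ≤ M) (t : ℝ) :
    |tiltedThirdCumulant μ A B t| ≤ 2 * M * tiltedVariance μ A B t := by
  have h0 := tiltedMoment_zero_pos hA hB hBM t
  set e := tiltedMean μ A B t with he_def
  have he : |e| ≤ M := by
    rw [he_def, tiltedMean, abs_div, abs_of_pos h0, div_le_iff₀ h0]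
    exact abs_tiltedMoment_one_le hA hB hBM t
  have hBe : ∀ᵐ x ∂μ, |B x - e| ≤ 2 * M := hBM.mono fun x hx => by
    linarith [abs_sub (B x) e]
  have hBe_meas : AEStronglyMeasurable (fun x => B x - e) μ := hB.sub aestronglyMeasurable_const
  have hint k := integrable_mul_exp_tilt hA hB hBM (hBe_meas.pow k) (K := (2 * M) ^ k)
    (hBe.mono fun x hx => by
      simpa only [Pi.pow_apply, abs_pow] using pow_le_pow_left₀ (abs_nonneg _) hx k) t
  have hvar : tiltedVariance μ A B t =
      (∫ x, (B x - e) ^ 2 * Real.exp (A x + t * B x) ∂μ) / tiltedMoment μ A B 0 t := by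
    rw [integral_sub_sq_mul_exp_tilt hA hB hBM, tiltedVariance, he_def, tiltedMean]
    field_simp
    ring
  have hthird : tiltedThirdCumulant μ A B t =
      (∫ x, (B x - e) ^ 3 * Real.exp (A x + t * B x) ∂μ) / tiltedMoment μ A B 0 t := by
    rw [integral_sub_cube_mul_exp_tilt hA hB hBM, tiltedThirdCumulant, he_def, tiltedMean]
    field_simp
    ring
  rw [hvar, hthird, abs_div, abs_of_pos h0, ← mul_div_assoc]
  refine div_le_div_of_nonneg_right ?_ h0.le
  rw [← integral_const_mul, ← Real.norm_eq_abs]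
  refine (norm_integral_le_integral_norm _).trans
    (integral_mono_ae (hint 3).norm ((hint 2).const_mul _) ?_)
  filter_upwards [hBe] with x hx
  rw [norm_mul, Real.norm_of_nonneg (Real.exp_pos _).le, norm_pow, Real.norm_eq_abs, pow_succ,
    sq_abs]
  calc (B x - e) ^ 2 * |B x - e| * Real.exp (A x + t * B x)
      = |B x - e| * ((B x - e) ^ 2 * Real.exp (A x + t * B x)) := by ring
    _ ≤ 2 * M * ((B x - e) ^ 2 * Real.exp (A x + t * B x)) := by gcongr

end TiltedMoments

theorem LowerSemicontinuousOn.aemeasurable_restrict {α β : Type*} [TopologicalSpace α]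
    [MeasurableSpace α] [OpensMeasurableSpace α] [TopologicalSpace β] [MeasurableSpace β]
    [BorelSpace β] [LinearOrder β] [OrderTopology β] [SecondCountableTopology β]
    {f : α → β} {s : Set α} {μ : Measure α} (hf : LowerSemicontinuousOn f s)
    (hs : MeasurableSet s) : AEMeasurable f (μ.restrict s) := by
  obtain ⟨g, hg, hgf⟩ := (MeasurableEmbedding.subtype_coe hs).exists_measurable_extend
    (lowerSemicontinuous_restrict_iff.2 hf).measurable fun x => ⟨f x⟩
  exact hg.aemeasurable.congr (ae_restrict_of_forall_mem hs fun x hx => congrFun hgf ⟨x, hx⟩)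

instance (d : ℕ) : IsProbabilityMeasure (muU d) :=
  ⟨by simp [muU, cube, Real.volume_Icc_pi]⟩

lemma hasSum_norm_coeffL {d : ℕ} (θ : SymmL1 d) : HasSum (fun l => ‖coeffL θ l‖) ‖θ‖ := by
  simpa [coeffL] using lp.hasSum_norm (p := 1) (by simp) (θ : lp (fun _ : Lam d => ℂ) 1)

lemma norm_phiF {d : ℕ} (l : Lam d) (x : Fin d → ℝ) : ‖phiF l x‖ = 1 := by
  have h : 2 * (Real.pi : ℂ) * Complex.I * ∑ i, (l.1 i : ℂ) * (x i : ℂ)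
      = ((2 * Real.pi * ∑ i, (l.1 i : ℝ) * x i : ℝ) : ℂ) * Complex.I := by
    push_cast
    ring
  rw [phiF, h, Complex.norm_exp_ofReal_mul_I]

lemma continuous_phiF {d : ℕ} (l : Lam d) : Continuous (phiF l) := by
  unfold phiF
  fun_prop

lemma norm_coeffL_mul_phiF {d : ℕ} (θ : SymmL1 d) (l : Lam d) (x : Fin d → ℝ) :
    ‖coeffL θ l * phiF l x‖ = ‖coeffL θ l‖ := by
  rw [norm_mul, norm_phiF, mul_one]

lemma summable_coeffL_mul_phiF {d : ℕ} (θ : SymmL1 d) (x : Fin d → ℝ) :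
    Summable (fun l => coeffL θ l * phiF l x) :=
  .of_norm (by simpa only [norm_coeffL_mul_phiF] using (hasSum_norm_coeffL θ).summable)

lemma abs_uFun_le {d : ℕ} (θ : SymmL1 d) (x : Fin d → ℝ) : |uFun θ x| ≤ ‖θ‖ := by
  refine (Complex.abs_re_le_norm _).trans ((norm_tsum_le_tsum_norm ?_).trans_eq ?_)
  all_goals simp only [norm_coeffL_mul_phiF]
  exacts [(hasSum_norm_coeffL θ).summable, (hasSum_norm_coeffL θ).tsum_eq]

lemma continuous_uFun {d : ℕ} (θ : SymmL1 d) : Continuous (uFun θ) :=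
  Complex.continuous_re.comp <| continuous_tsum (fun l => continuous_const.mul (continuous_phiF l))
    (hasSum_norm_coeffL θ).summable fun l x => (norm_coeffL_mul_phiF θ l x).le

lemma coeffL_add {d : ℕ} (θ η : SymmL1 d) (l : Lam d) :
    coeffL (θ + η) l = coeffL θ l + coeffL η l := rfl

lemma coeffL_smul {d : ℕ} (s : ℝ) (θ : SymmL1 d) (l : Lam d) :
    coeffL (s • θ) l = s * coeffL θ l := by
  simp [coeffL, Complex.real_smul]

lemma uFun_add {d : ℕ} (θ η : SymmL1 d) (x : Fin d → ℝ) :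
    uFun (θ + η) x = uFun θ x + uFun η x := by
  simp only [uFun, coeffL_add, add_mul,
    (summable_coeffL_mul_phiF θ x).tsum_add (summable_coeffL_mul_phiF η x), Complex.add_re]

lemma uFun_smul {d : ℕ} (s : ℝ) (θ : SymmL1 d) (x : Fin d → ℝ) :
    uFun (s • θ) x = s * uFun θ x := by
  simp only [uFun, coeffL_smul, mul_assoc, tsum_mul_left, Complex.re_ofReal_mul]

lemma integrable_exp_uFun_sub_div {d : ℕ} (θ : SymmL1 d) {f : (Fin d → ℝ) → ℝ}
    (hf : LowerSemicontinuousOn f (cube d)) {ε : ℝ} (hε : 0 < ε) :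
    Integrable (fun x => Real.exp ((uFun θ x - f x) / ε)) (muU d) := by
  obtain ⟨m, hm⟩ := hf.bddBelow_of_isCompact isCompact_Icc
  have hmeas : AEMeasurable (fun x => (uFun θ x - f x) / ε) (muU d) :=
    ((continuous_uFun θ).aemeasurable.sub (hf.aemeasurable_restrict measurableSet_Icc)).div_const ε
  refine .of_bound (Real.continuous_exp.comp_aestronglyMeasurable hmeas.aestronglyMeasurable)
    (Real.exp ((‖θ‖ - m) / ε)) (ae_restrict_of_forall_mem measurableSet_Icc fun x hx => ?_)
  rw [Real.norm_of_nonneg (Real.exp_pos _).le, Real.exp_le_exp]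
  have hfx : m ≤ f x := hm ⟨x, hx, rfl⟩
  have huθ : uFun θ x ≤ ‖θ‖ := (abs_le.1 (abs_uFun_le θ x)).2
  gcongr

lemma hEps_segment {d : ℕ} {ε : ℝ} {c : (Fin d → ℝ) → (Fin d → ℝ) → ℝ} (a b : SymmL1 d)
    (y : Fin d → ℝ) (s : ℝ) :
    hEps ε c (a + s • (b - a)) y = ε * Real.log (tiltedMoment (muU d)
      (fun x => (uFun a x - c x y) / ε) (fun x => uFun (b - a) x / ε) 0 s) + ε := by
  simp only [hEps, tiltedMoment, pow_zero, one_mul, uFun_add, uFun_smul]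
  congr 4 with x
  congr 1
  ring

theorem statement8_general
    (d : ℕ) (ε : ℝ) (hε : 0 < ε)
    (Y : Set (Fin d → ℝ))
    (c : (Fin d → ℝ) → (Fin d → ℝ) → ℝ)
    (hc_lsc : LowerSemicontinuousOn (fun p : (Fin d → ℝ) × (Fin d → ℝ) => c p.1 p.2)
      (cube d ×ˢ Y)) :
    ∀ y ∈ Y, ∀ a b : SymmL1 d,
      ∃ p1 p2 p3 : ℝ → ℝ,
        (∀ t ∈ Set.Ioo (0 : ℝ) 1,
          HasDerivAt (fun s : ℝ => hEps ε c (a + s • (b - a)) y) (p1 t) t ∧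
          HasDerivAt p1 (p2 t) t ∧ HasDerivAt p2 (p3 t) t) ∧
        (∀ t ∈ Set.Ioo (0 : ℝ) 1, |p3 t| ≤ (2 / ε) * ‖b - a‖ * p2 t) := by
  intro y hy a b
  have hcy : LowerSemicontinuousOn (fun x => c x y) (cube d) :=
    hc_lsc.comp (g := fun x => (x, y)) (by fun_prop) fun x hx => ⟨hx, hy⟩
  set A := fun x => (uFun a x - c x y) / ε
  set B := fun x => uFun (b - a) x / ε
  have hA : Integrable (fun x => Real.exp (A x)) (muU d) := integrable_exp_uFun_sub_div a hcy hε
  have hB : AEStronglyMeasurable B (muU d) :=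
    ((continuous_uFun _).div_const ε).aestronglyMeasurable
  have hBM : ∀ᵐ x ∂muU d, |B x| ≤ ‖b - a‖ / ε := ae_of_all _ fun x => by
    rw [abs_div, abs_of_pos hε]
    exact div_le_div_of_nonneg_right (abs_uFun_le _ x) hε.le
  refine ⟨fun t => ε * tiltedMean (muU d) A B t, fun t => ε * tiltedVariance (muU d) A B t,
    fun t => ε * tiltedThirdCumulant (muU d) A B t, fun t _ => ⟨?_, ?_, ?_⟩, fun t _ => ?_⟩
  · rw [funext (hEps_segment a b y)]
    exact ((hasDerivAt_log_tiltedMoment_zero hA hB hBM t).const_mul ε).add_const ε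
  · exact (hasDerivAt_tiltedMean hA hB hBM t).const_mul ε
  · exact (hasDerivAt_tiltedVariance hA hB hBM t).const_mul ε
  · calc |ε * tiltedThirdCumulant (muU d) A B t|
        = ε * |tiltedThirdCumulant (muU d) A B t| := by rw [abs_mul, abs_of_pos hε]
      _ ≤ ε * (2 * (‖b - a‖ / ε) * tiltedVariance (muU d) A B t) :=
        mul_le_mul_of_nonneg_left (abs_tiltedThirdCumulant_le hA hB hBM t) hε.le
      _ = 2 / ε * ‖b - a‖ * (ε * tiltedVariance (muU d) A B t) := by
        field_simp

/-- self-concordance of `h_ε(·,y)` along segments.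
For every `y ∈ 𝒴` and `a, b ∈ ℓ̄₁(Λ)`, the function `φ(t) = h_ε(a + t(b − a), y)` is
three times differentiable on `(0,1)` and `|φ'''(t)| ≤ (2/ε) ‖b − a‖_{ℓ1} φ''(t)`. -/
theorem statement8
    (d : ℕ) (hd : 0 < d) (ε : ℝ) (hε : 0 < ε)
    (Y : Set (Fin d → ℝ)) (ν : Measure (Fin d → ℝ)) [IsProbabilityMeasure ν]
    (hνY : ν Yᶜ = 0)
    (c : (Fin d → ℝ) → (Fin d → ℝ) → ℝ)
    (hc_lsc : LowerSemicontinuousOn (fun p : (Fin d → ℝ) × (Fin d → ℝ) => c p.1 p.2)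
      (cube d ×ˢ Y))
    (hc_int : Integrable (fun p : (Fin d → ℝ) × (Fin d → ℝ) => c p.1 p.2) ((muU d).prod ν)) :
    ∀ y ∈ Y, ∀ a b : SymmL1 d,
      ∃ p1 p2 p3 : ℝ → ℝ,
        (∀ t ∈ Set.Ioo (0 : ℝ) 1,
          HasDerivAt (fun s : ℝ => hEps ε c (a + s • (b - a)) y) (p1 t) t ∧
          HasDerivAt p1 (p2 t) t ∧ HasDerivAt p2 (p3 t) t) ∧
        (∀ t ∈ Set.Ioo (0 : ℝ) 1, |p3 t| ≤ (2 / ε) * ‖b - a‖ * p2 t) :=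
  statement8_general d ε hε Y c hc_lsc

end
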